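/- Let x̂, x ∈ ℝ^m be the predicted and true PSC-encoded vectors of angles φ̂ and φ respectively, with m = 3, where x_i = cos(φ + 2iπ/m). Then the PSC loss (1/m)·‖x̂ − x‖² equals (1 − cos(φ̂ − φ)), i.e., it is a function only of the angular difference. -/
import Mathlib


open Real in
theorem psc_loss_eq (φ φ' : ℝ) :
    (1 / 3 : ℝ) * ∑ i ∈ Finset.Icc (1 : ℕ) 3,
        (Real.cos (φ' + 2 * (i : ℝ) * π / 3) - Real.cos (φ + 2 * (i : ℝ) * π / 3))^2
      = 1 - Real.cos (φ' - φ) := by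
  have h : Finset.Icc (1 : ℕ) 3 = {1, 2, 3} := by decide
  rw [h]
  have c23 : Real.cos (2 * π / 3) = -(1/2) := by
    have : (2 : ℝ) * π / 3 = π - π/3 := by ring
    rw [this, Real.cos_pi_sub, Real.cos_pi_div_three]
  have s23 : Real.sin (2 * π / 3) = Real.sqrt 3 / 2 := by
    have : (2 : ℝ) * π / 3 = π - π/3 := by ring
    rw [this, Real.sin_pi_sub, Real.sin_pi_div_three]
  have c43 : Real.cos (4 * π / 3) = -(1/2) := by
    have : (4 : ℝ) * π / 3 = π + π/3 := by ring
    rw [this, Real.cos_add, Real.cos_pi, Real.sin_pi, Real.cos_pi_div_three]; ring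
  have s43 : Real.sin (4 * π / 3) = -(Real.sqrt 3 / 2) := by
    have : (4 : ℝ) * π / 3 = π + π/3 := by ring
    rw [this, Real.sin_add, Real.cos_pi, Real.sin_pi, Real.sin_pi_div_three]; ring
  have e1 : ∀ x : ℝ, Real.cos (x + 2 * (1 : ℕ) * π / 3) =
      Real.cos x * (-(1/2)) - Real.sin x * (Real.sqrt 3 / 2) := by
    intro x
    have : x + 2 * ((1 : ℕ) : ℝ) * π / 3 = x + 2 * π / 3 := by push_cast; ring
    rw [this, Real.cos_add, c23, s23]
  have e2 : ∀ x : ℝ, Real.cos (x + 2 * (2 : ℕ) * π / 3) =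
      Real.cos x * (-(1/2)) - Real.sin x * (-(Real.sqrt 3 / 2)) := by
    intro x
    have : x + 2 * ((2 : ℕ) : ℝ) * π / 3 = x + 4 * π / 3 := by push_cast; ring
    rw [this, Real.cos_add, c43, s43]
  have e3 : ∀ x : ℝ, Real.cos (x + 2 * (3 : ℕ) * π / 3) = Real.cos x := by
    intro x
    have : x + 2 * ((3 : ℕ) : ℝ) * π / 3 = x + 2 * π := by push_cast; ring
    rw [this, Real.cos_add_two_pi]
  rw [Finset.sum_insert (by decide), Finset.sum_insert (by decide),
    Finset.sum_singleton, e1, e2, e3, e1, e2, e3]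
  rw [Real.cos_sub]
  have h3 : Real.sqrt 3 ^ 2 = 3 := Real.sq_sqrt (by norm_num)
  have pφ : Real.sin φ ^ 2 + Real.cos φ ^ 2 = 1 := Real.sin_sq_add_cos_sq φ
  have pφ' : Real.sin φ' ^ 2 + Real.cos φ' ^ 2 = 1 := Real.sin_sq_add_cos_sq φ'
  nlinarith [pφ, pφ', h3]
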